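/- Let X ≠ 0 be a real m×n matrix with rank(X) ≤ k. Then the matrix X / ‖X‖_{k,2} is a subgradient of the dual Ky Fan 2-k-norm at X, i.e., for all Y, ‖X + Y‖_{k,2}^⋆ − ‖X‖_{k,2}^⋆ ≥ ⟨X/‖X‖_{k,2}, Y⟩. -/

import Mathlib

open Matrix

/-- Singular values of a real `m × n` matrix, sorted in decreasing order
(indexed by `Fin n`; `σ i = sqrt` of the `i`-th largest eigenvalue of `Aᵀ * A`). -/
noncomputable def svalsDesc {m n : ℕ} (A : Matrix (Fin m) (Fin n) ℝ) : Fin n → ℝ :=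
  fun i =>
    Real.sqrt
      (((show (Aᵀ * A).IsHermitian from by
        simpa using Matrix.isHermitian_conjTranspose_mul_self A).eigenvalues ∘
        Tuple.sort (show (Aᵀ * A).IsHermitian from by
        simpa using Matrix.isHermitian_conjTranspose_mul_self A).eigenvalues) i.rev)

/-- Ky Fan 2-k-norm: `(∑_{i=1}^k σ_i(A)²)^{1/2}`. -/
noncomputable def kyFan2 {m n : ℕ} (k : ℕ) (A : Matrix (Fin m) (Fin n) ℝ) : ℝ :=
  Real.sqrt (∑ i ∈ Finset.univ.filter (fun i : Fin n => (i : ℕ) < k), (svalsDesc A i) ^ 2)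

/-- Frobenius inner product `⟨A, B⟩ = trace (Aᵀ B)`. -/
noncomputable def frobInner {m n : ℕ} (A B : Matrix (Fin m) (Fin n) ℝ) : ℝ :=
  ∑ i, ∑ j, A i j * B i j

/-- Frobenius norm. -/
noncomputable def frobNorm {m n : ℕ} (A : Matrix (Fin m) (Fin n) ℝ) : ℝ :=
  Real.sqrt (∑ i, ∑ j, (A i j) ^ 2)

/-- Dual Ky Fan 2-k-norm `‖A‖_{k,2}^⋆ = max {⟨A,X⟩ : ‖X‖_{k,2} ≤ 1}`. -/
noncomputable def kyFan2Dual {m n : ℕ} (k : ℕ) (A : Matrix (Fin m) (Fin n) ℝ) : ℝ :=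
  sSup {c : ℝ | ∃ X : Matrix (Fin m) (Fin n) ℝ, kyFan2 k X ≤ 1 ∧ c = frobInner A X}

/-- The linear map `𝒜` satisfies the restricted isometry inequality with constant `δ`
for all matrices of rank at most `r`. -/
def HasRIP {m n p : ℕ} (𝒜 : Matrix (Fin m) (Fin n) ℝ →ₗ[ℝ] EuclideanSpace ℝ (Fin p))
    (r : ℕ) (δ : ℝ) : Prop :=
  ∀ X : Matrix (Fin m) (Fin n) ℝ, X.rank ≤ r →
    (1 - δ) * frobNorm X ≤ ‖𝒜 X‖ ∧ ‖𝒜 X‖ ≤ (1 + δ) * frobNorm X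

/-
For `rank X ≤ k`, expand `⟨X, Z⟩` in an eigenbasis of `Xᵀ X`: only the at most `k` eigenvectors
with nonzero eigenvalue contribute, so Cauchy–Schwarz and Ky Fan's maximum principle give
`⟨X, Z⟩ ≤ ‖X‖_F ‖Z‖_{k,2}`. With `Z = X` this shows `‖X‖_{k,2} = ‖X‖_F`, and in general it bounds
`‖X‖_{k,2}^⋆ ≤ ‖X‖_F`. On the other hand `W = X / ‖X‖_{k,2}` has `‖W‖_{k,2} = 1`, so
`‖X + Y‖_{k,2}^⋆ ≥ ⟨X + Y, W⟩ = ‖X‖_F + ⟨W, Y⟩`.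
-/

open Finset
open scoped RealInnerProductSpace

/-- The bathtub principle; compare every value with the threshold `l k`, the largest one left
out. -/
theorem Antitone.sum_mul_le_sum_filter_lt {n k : ℕ} {l c : Fin n → ℝ} (hl : Antitone l)
    (hl0 : ∀ j, 0 ≤ l j) (hc0 : ∀ j, 0 ≤ c j) (hc1 : ∀ j, c j ≤ 1) (hck : ∑ j, c j ≤ k) :
    ∑ j, l j * c j ≤ ∑ j ∈ univ.filter (fun j : Fin n => (j : ℕ) < k), l j := by
  rcases lt_or_ge k n with hkn | hnk
  · set t := l ⟨k, hkn⟩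
    have hterm : ∀ j : Fin n, l j * c j ≤
        (if (j : ℕ) < k then l j else 0) + t * (c j - if (j : ℕ) < k then 1 else 0) := by
      intro j
      split_ifs with hj
      · have : t ≤ l j := hl (Fin.le_def.mpr (by simp; omega))
        nlinarith [hc1 j]
      · have : l j ≤ t := hl (Fin.le_def.mpr (by simp; omega))
        nlinarith [hc0 j]
    have hcard : ∑ j : Fin n, (if (j : ℕ) < k then (1 : ℝ) else 0) = k := by
      rw [sum_boole, Fin.card_filter_val_lt, min_eq_right hkn.le]
    calc ∑ j, l j * c j
        ≤ ∑ j : Fin n,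
            ((if (j : ℕ) < k then l j else 0) + t * (c j - if (j : ℕ) < k then 1 else 0)) :=
          sum_le_sum fun j _ => hterm j
      _ = ∑ j ∈ univ.filter (fun j : Fin n => (j : ℕ) < k), l j + t * (∑ j, c j - k) := by
          rw [sum_add_distrib, ← mul_sum, sum_sub_distrib, hcard, sum_ite, sum_const_zero,
            add_zero]
      _ ≤ ∑ j ∈ univ.filter (fun j : Fin n => (j : ℕ) < k), l j := by
          nlinarith [hl0 ⟨k, hkn⟩]
  · rw [filter_true_of_mem fun j _ => j.2.trans_le hnk]
    exact sum_le_sum fun j _ => mul_le_of_le_one_right (hl0 j) (hc1 j)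

section Frobenius

variable {m n : ℕ}

lemma frobInner_comm (A B : Matrix (Fin m) (Fin n) ℝ) : frobInner A B = frobInner B A := by
  simp only [frobInner, mul_comm]

lemma frobInner_add_left (A B C : Matrix (Fin m) (Fin n) ℝ) :
    frobInner (A + B) C = frobInner A C + frobInner B C := by
  simp only [frobInner, Matrix.add_apply, add_mul, sum_add_distrib]

lemma frobInner_smul_left (c : ℝ) (A B : Matrix (Fin m) (Fin n) ℝ) :
    frobInner (c • A) B = c * frobInner A B := by
  simp only [frobInner, Matrix.smul_apply, smul_eq_mul, mul_sum, mul_assoc]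

lemma frobNorm_nonneg (A : Matrix (Fin m) (Fin n) ℝ) : 0 ≤ frobNorm A :=
  Real.sqrt_nonneg _

lemma frobNorm_sq (A : Matrix (Fin m) (Fin n) ℝ) : frobNorm A ^ 2 = frobInner A A := by
  rw [frobNorm, Real.sq_sqrt (by positivity)]
  simp only [frobInner, sq]

lemma frobNorm_pos {A : Matrix (Fin m) (Fin n) ℝ} (hA : A ≠ 0) : 0 < frobNorm A := by
  obtain ⟨i, j, hij⟩ : ∃ i j, A i j ≠ 0 := by
    by_contra! h
    exact hA (Matrix.ext h)
  refine Real.sqrt_pos.mpr ?_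
  calc 0 < A i j ^ 2 := by positivity
    _ ≤ ∑ j, A i j ^ 2 := single_le_sum (fun j _ => sq_nonneg (A i j)) (mem_univ j)
    _ ≤ ∑ i, ∑ j, A i j ^ 2 :=
      single_le_sum (f := fun i => ∑ j, A i j ^ 2) (fun i _ => by positivity) (mem_univ i)

lemma frobNorm_smul (c : ℝ) (A : Matrix (Fin m) (Fin n) ℝ) :
    frobNorm (c • A) = |c| * frobNorm A := by
  rw [← Real.sqrt_sq (abs_nonneg c), frobNorm, frobNorm, ← Real.sqrt_mul (sq_nonneg _), sq_abs]
  simp only [Matrix.smul_apply, smul_eq_mul, mul_pow, mul_sum]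

lemma frobInner_eq_sum_inner {ι : Type*} [Fintype ι] (A B : Matrix (Fin m) (Fin n) ℝ)
    (v : OrthonormalBasis ι ℝ (EuclideanSpace ℝ (Fin n))) :
    frobInner A B = ∑ j, ⟪toEuclideanLin A (v j), toEuclideanLin B (v j)⟫ := by
  have hrow : ∀ (C : Matrix (Fin m) (Fin n) ℝ) w a,
      toEuclideanLin C w a = ⟪WithLp.toLp 2 (C a), w⟫ := by
    intro C w a
    simp [toLpLin_apply, EuclideanSpace.inner_eq_star_dotProduct, mulVec, dotProduct_comm]
  calc frobInner A B = ∑ a, ⟪WithLp.toLp 2 (A a), WithLp.toLp 2 (B a)⟫ := by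
        simp [frobInner, PiLp.inner_apply, mul_comm]
    _ = ∑ a, ∑ j, ⟪WithLp.toLp 2 (A a), v j⟫ * ⟪v j, WithLp.toLp 2 (B a)⟫ := by
        simp only [v.sum_inner_mul_inner]
    _ = ∑ j, ⟪toEuclideanLin A (v j), toEuclideanLin B (v j)⟫ := by
        rw [sum_comm]
        refine sum_congr rfl fun j _ => ?_
        rw [PiLp.inner_apply]
        simp only [hrow, real_inner_comm (v j), RCLike.inner_apply, conj_trivial, mul_comm]

lemma frobNorm_sq_eq_sum_norm_sq {ι : Type*} [Fintype ι] (A : Matrix (Fin m) (Fin n) ℝ)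
    (v : OrthonormalBasis ι ℝ (EuclideanSpace ℝ (Fin n))) :
    frobNorm A ^ 2 = ∑ j, ‖toEuclideanLin A (v j)‖ ^ 2 := by
  simp only [frobNorm_sq, frobInner_eq_sum_inner A A v, real_inner_self_eq_norm_sq]

end Frobenius

section Gram

variable {m n : ℕ}

lemma isHermitian_transpose_mul_self (A : Matrix (Fin m) (Fin n) ℝ) : (Aᵀ * A).IsHermitian := by
  simpa using isHermitian_conjTranspose_mul_self A

lemma posSemidef_transpose_mul_self (A : Matrix (Fin m) (Fin n) ℝ) : (Aᵀ * A).PosSemidef := by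
  simpa using posSemidef_conjTranspose_mul_self A

lemma toEuclideanLin_transpose_mul_self_eigenvectorBasis (A : Matrix (Fin m) (Fin n) ℝ)
    (j : Fin n) :
    toEuclideanLin (Aᵀ * A) ((isHermitian_transpose_mul_self A).eigenvectorBasis j) =
      (isHermitian_transpose_mul_self A).eigenvalues j •
        (isHermitian_transpose_mul_self A).eigenvectorBasis j := by
  ext i
  simpa [toLpLin_apply] using
    congrFun ((isHermitian_transpose_mul_self A).mulVec_eigenvectorBasis j) i

lemma norm_toEuclideanLin_sq_eq_inner (A : Matrix (Fin m) (Fin n) ℝ)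
    (u : EuclideanSpace ℝ (Fin n)) :
    ‖toEuclideanLin A u‖ ^ 2 = ⟪u, toEuclideanLin (Aᵀ * A) u⟫ := by
  rw [← real_inner_self_eq_norm_sq, toLpLin_mul_same, LinearMap.comp_apply,
    ← conjTranspose_eq_transpose_of_trivial, toEuclideanLin_conjTranspose_eq_adjoint,
    LinearMap.adjoint_inner_right]

lemma norm_toEuclideanLin_sq (A : Matrix (Fin m) (Fin n) ℝ) (u : EuclideanSpace ℝ (Fin n)) :
    ‖toEuclideanLin A u‖ ^ 2 = ∑ j, (isHermitian_transpose_mul_self A).eigenvalues j *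
      ⟪(isHermitian_transpose_mul_self A).eigenvectorBasis j, u⟫ ^ 2 := by
  set hA := isHermitian_transpose_mul_self A
  have hsymm := isSymmetric_toEuclideanLin_iff.mpr hA
  rw [norm_toEuclideanLin_sq_eq_inner, ← hA.eigenvectorBasis.sum_inner_mul_inner]
  refine sum_congr rfl fun j _ => ?_
  rw [← hsymm, toEuclideanLin_transpose_mul_self_eigenvectorBasis, real_inner_smul_left,
    real_inner_comm u]
  ring

lemma toEuclideanLin_eigenvectorBasis_eq_zero (A : Matrix (Fin m) (Fin n) ℝ) {j : Fin n}
    (hj : (isHermitian_transpose_mul_self A).eigenvalues j = 0) :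
    toEuclideanLin A ((isHermitian_transpose_mul_self A).eigenvectorBasis j) = 0 := by
  rw [← norm_eq_zero, ← sq_eq_zero_iff, norm_toEuclideanLin_sq_eq_inner,
    toEuclideanLin_transpose_mul_self_eigenvectorBasis, hj, zero_smul, inner_zero_right]

end Gram

section SingularValues

variable {m n : ℕ}

noncomputable def svalsDescPerm (A : Matrix (Fin m) (Fin n) ℝ) : Equiv.Perm (Fin n) :=
  Fin.revPerm.trans (Tuple.sort (isHermitian_transpose_mul_self A).eigenvalues)

lemma svalsDesc_sq (A : Matrix (Fin m) (Fin n) ℝ) (i : Fin n) :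
    svalsDesc A i ^ 2 = (isHermitian_transpose_mul_self A).eigenvalues (svalsDescPerm A i) :=
  Real.sq_sqrt ((posSemidef_transpose_mul_self A).eigenvalues_nonneg _)

lemma svalsDesc_nonneg (A : Matrix (Fin m) (Fin n) ℝ) (i : Fin n) : 0 ≤ svalsDesc A i :=
  Real.sqrt_nonneg _

lemma svalsDesc_antitone (A : Matrix (Fin m) (Fin n) ℝ) : Antitone (svalsDesc A) :=
  fun _ _ hij => Real.sqrt_le_sqrt (Tuple.monotone_sort _ (Fin.rev_le_rev.mpr hij))

lemma sum_svalsDesc_sq (A : Matrix (Fin m) (Fin n) ℝ) :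
    ∑ i, svalsDesc A i ^ 2 = frobNorm A ^ 2 := by
  set hA := isHermitian_transpose_mul_self A
  rw [frobNorm_sq_eq_sum_norm_sq A hA.eigenvectorBasis]
  simp only [svalsDesc_sq]
  rw [Equiv.sum_comp (svalsDescPerm A) hA.eigenvalues]
  refine sum_congr rfl fun j _ => ?_
  rw [norm_toEuclideanLin_sq_eq_inner, toEuclideanLin_transpose_mul_self_eigenvectorBasis,
    real_inner_smul_right, real_inner_self_eq_norm_sq, hA.eigenvectorBasis.orthonormal.1 j]
  ring

lemma kyFan2_nonneg (k : ℕ) (A : Matrix (Fin m) (Fin n) ℝ) : 0 ≤ kyFan2 k A :=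
  Real.sqrt_nonneg _

lemma kyFan2_sq (k : ℕ) (A : Matrix (Fin m) (Fin n) ℝ) :
    kyFan2 k A ^ 2 = ∑ i ∈ univ.filter (fun i : Fin n => (i : ℕ) < k), svalsDesc A i ^ 2 :=
  Real.sq_sqrt (sum_nonneg fun _ _ => sq_nonneg _)

lemma kyFan2_le_frobNorm (k : ℕ) (A : Matrix (Fin m) (Fin n) ℝ) : kyFan2 k A ≤ frobNorm A := by
  rw [kyFan2, Real.sqrt_le_left (frobNorm_nonneg A), ← sum_svalsDesc_sq]
  exact sum_le_sum_of_subset_of_nonneg (filter_subset _ _) fun _ _ _ => sq_nonneg _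

end SingularValues

section KyFan

variable {m n : ℕ}

/-- Ky Fan's maximum principle: the weights `∑ i, ⟪v j, u i⟫ ^ 2` of the eigenvectors `v j` of
`Aᵀ * A` lie in `[0, 1]` (Bessel) and add up to `card ι` (Parseval), so the bathtub principle
applies. -/
theorem sum_norm_toEuclideanLin_sq_le_kyFan2_sq {ι : Type*} [Fintype ι] {k : ℕ}
    (A : Matrix (Fin m) (Fin n) ℝ) {u : ι → EuclideanSpace ℝ (Fin n)} (hu : Orthonormal ℝ u)
    (hk : Fintype.card ι ≤ k) :
    ∑ i, ‖toEuclideanLin A (u i)‖ ^ 2 ≤ kyFan2 k A ^ 2 := by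
  set hA := isHermitian_transpose_mul_self A
  set v := hA.eigenvectorBasis
  set c : Fin n → ℝ := fun j => ∑ i, ⟪v j, u i⟫ ^ 2
  have hc0 : ∀ j, 0 ≤ c j := fun j => sum_nonneg fun i _ => sq_nonneg _
  have hc1 : ∀ j, c j ≤ 1 := by
    intro j
    simpa [c, v.orthonormal.1 j, real_inner_comm] using hu.sum_inner_products_le (s := univ) (v j)
  have hcsum : ∑ j, c j = Fintype.card ι := by
    rw [sum_comm]
    simp [v.sum_sq_inner_right, hu.1]
  calc ∑ i, ‖toEuclideanLin A (u i)‖ ^ 2 = ∑ j, hA.eigenvalues j * c j := by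
        simp only [norm_toEuclideanLin_sq, c, mul_sum]
        exact sum_comm
    _ = ∑ i, svalsDesc A i ^ 2 * c (svalsDescPerm A i) := by
        simp only [svalsDesc_sq]
        exact (Equiv.sum_comp (svalsDescPerm A) (fun j => hA.eigenvalues j * c j)).symm
    _ ≤ ∑ i ∈ univ.filter (fun i : Fin n => (i : ℕ) < k), svalsDesc A i ^ 2 := by
        refine Antitone.sum_mul_le_sum_filter_lt
          (fun i j hij => pow_le_pow_left₀ (svalsDesc_nonneg A j) (svalsDesc_antitone A hij) 2)
          (fun _ => sq_nonneg _) (fun _ => hc0 _) (fun _ => hc1 _) ?_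
        rw [Equiv.sum_comp (svalsDescPerm A) c, hcsum]
        exact_mod_cast hk
    _ = kyFan2 k A ^ 2 := (kyFan2_sq k A).symm

lemma norm_toEuclideanLin_le_kyFan2 {k : ℕ} (hk : 1 ≤ k) (A : Matrix (Fin m) (Fin n) ℝ)
    {u : EuclideanSpace ℝ (Fin n)} (hu : ‖u‖ = 1) : ‖toEuclideanLin A u‖ ≤ kyFan2 k A := by
  have hone : Orthonormal ℝ (fun _ : Unit => u) :=
    ⟨fun _ => hu, fun i j hij => absurd (Subsingleton.elim i j) hij⟩
  have := sum_norm_toEuclideanLin_sq_le_kyFan2_sq A hone (by simpa using hk)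
  simp only [univ_unique, sum_singleton] at this
  exact le_of_pow_le_pow_left₀ two_ne_zero (kyFan2_nonneg k A) this

end KyFan

section Duality

variable {m n k : ℕ}

theorem frobInner_le_frobNorm_mul_kyFan2 {X : Matrix (Fin m) (Fin n) ℝ} (hr : X.rank ≤ k)
    (Z : Matrix (Fin m) (Fin n) ℝ) : frobInner X Z ≤ frobNorm X * kyFan2 k Z := by
  set hX := isHermitian_transpose_mul_self X
  set v := hX.eigenvectorBasis
  set S := univ.filter fun j => hX.eigenvalues j ≠ 0
  have hS : #S ≤ k := by
    rw [← Fintype.card_subtype, ← hX.rank_eq_card_non_zero_eigs, rank_transpose_mul_self]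
    exact hr
  have hX0 : ∀ j ∉ S, toEuclideanLin X (v j) = 0 := fun j hj =>
    toEuclideanLin_eigenvectorBasis_eq_zero X (by simpa [S] using hj)
  calc frobInner X Z = ∑ j ∈ S, ⟪toEuclideanLin X (v j), toEuclideanLin Z (v j)⟫ := by
        rw [frobInner_eq_sum_inner X Z v]
        exact (sum_subset (subset_univ S) fun j _ hj => by simp [hX0 j hj]).symm
    _ ≤ ∑ j ∈ S, ‖toEuclideanLin X (v j)‖ * ‖toEuclideanLin Z (v j)‖ :=
        sum_le_sum fun j _ => real_inner_le_norm _ _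
    _ ≤ √(∑ j ∈ S, ‖toEuclideanLin X (v j)‖ ^ 2) * √(∑ j ∈ S, ‖toEuclideanLin Z (v j)‖ ^ 2) :=
        Real.sum_mul_le_sqrt_mul_sqrt _ _ _
    _ ≤ frobNorm X * kyFan2 k Z := by
        refine mul_le_mul ?_ ?_ (Real.sqrt_nonneg _) (frobNorm_nonneg X)
        · rw [Real.sqrt_le_left (frobNorm_nonneg X), frobNorm_sq_eq_sum_norm_sq X v]
          exact sum_le_sum_of_subset_of_nonneg (subset_univ S) fun _ _ _ => sq_nonneg _
        · rw [Real.sqrt_le_left (kyFan2_nonneg k Z), ← sum_coe_sort S]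
          exact sum_norm_toEuclideanLin_sq_le_kyFan2_sq Z
            (v.orthonormal.comp _ Subtype.val_injective) (by simpa using hS)

lemma kyFan2_eq_frobNorm_of_rank_le {X : Matrix (Fin m) (Fin n) ℝ} (hr : X.rank ≤ k) :
    kyFan2 k X = frobNorm X := by
  refine le_antisymm (kyFan2_le_frobNorm k X) ?_
  have h := frobInner_le_frobNorm_mul_kyFan2 hr X
  rw [← frobNorm_sq] at h
  nlinarith [frobNorm_nonneg X, kyFan2_nonneg k X]

lemma bddAbove_kyFan2Dual (hk : 1 ≤ k) (A : Matrix (Fin m) (Fin n) ℝ) :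
    BddAbove {c : ℝ | ∃ Z : Matrix (Fin m) (Fin n) ℝ, kyFan2 k Z ≤ 1 ∧ c = frobInner A Z} := by
  set e := EuclideanSpace.basisFun (Fin n) ℝ
  refine ⟨∑ j, ‖toEuclideanLin A (e j)‖, ?_⟩
  rintro _ ⟨Z, hZ, rfl⟩
  rw [frobInner_eq_sum_inner A Z e]
  refine sum_le_sum fun j _ => (real_inner_le_norm _ _).trans ?_
  refine mul_le_of_le_one_right (norm_nonneg _) ?_
  exact (norm_toEuclideanLin_le_kyFan2 hk Z (e.orthonormal.1 j)).trans hZ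

lemma le_kyFan2Dual (hk : 1 ≤ k) (A : Matrix (Fin m) (Fin n) ℝ)
    {Z : Matrix (Fin m) (Fin n) ℝ} (hZ : kyFan2 k Z ≤ 1) : frobInner A Z ≤ kyFan2Dual k A :=
  le_csSup (bddAbove_kyFan2Dual hk A) ⟨Z, hZ, rfl⟩

lemma kyFan2Dual_le_frobNorm_of_rank_le {X : Matrix (Fin m) (Fin n) ℝ} (hr : X.rank ≤ k) :
    kyFan2Dual k X ≤ frobNorm X := by
  refine csSup_le ⟨_, 0, ?_, rfl⟩ ?_
  · exact (kyFan2_le_frobNorm k 0).trans (by simp [frobNorm])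
  · rintro _ ⟨Z, hZ, rfl⟩
    exact (frobInner_le_frobNorm_mul_kyFan2 hr Z).trans
      (mul_le_of_le_one_right (frobNorm_nonneg X) hZ)

end Duality

theorem subgradient_of_dual_norm_general {m n k : ℕ}
    (X : Matrix (Fin m) (Fin n) ℝ) (hX : X ≠ 0) (hr : X.rank ≤ k) :
    ∀ Y : Matrix (Fin m) (Fin n) ℝ,
      kyFan2Dual k (X + Y) - kyFan2Dual k X ≥ frobInner ((kyFan2 k X)⁻¹ • X) Y := by
  intro Y
  have hN : kyFan2 k X = frobNorm X := kyFan2_eq_frobNorm_of_rank_le hr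
  have hF : 0 < frobNorm X := frobNorm_pos hX
  have hk : 1 ≤ k := Nat.one_le_iff_ne_zero.mpr fun hk0 => hF.ne' (by simp [← hN, hk0, kyFan2])
  set W := (kyFan2 k X)⁻¹ • X
  have hW : kyFan2 k W ≤ 1 := by
    refine (kyFan2_le_frobNorm k W).trans_eq ?_
    rw [frobNorm_smul, hN, abs_inv, abs_of_pos hF, inv_mul_cancel₀ hF.ne']
  have hXW : frobInner X W = frobNorm X := by
    rw [frobInner_comm, frobInner_smul_left, ← frobNorm_sq, hN]
    field_simp
  have h1 := le_kyFan2Dual hk (X + Y) hW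
  have h2 := kyFan2Dual_le_frobNorm_of_rank_le hr
  rw [frobInner_add_left, hXW, frobInner_comm] at h1
  linarith

/-- for `X ≠ 0` of rank ≤ k, `X / ‖X‖_{k,2}` is a subgradient of
the dual Ky Fan 2-k-norm at `X`. -/
theorem subgradient_of_dual_norm {m n k : ℕ} (hk1 : 1 ≤ k) (hk : k ≤ min m n)
    (X : Matrix (Fin m) (Fin n) ℝ) (hX : X ≠ 0) (hr : X.rank ≤ k) :
    ∀ Y : Matrix (Fin m) (Fin n) ℝ,
      kyFan2Dual k (X + Y) - kyFan2Dual k X ≥ frobInner ((kyFan2 k X)⁻¹ • X) Y :=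
  subgradient_of_dual_norm_general X hX hr
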